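/- arXiv:2511.22795 — 5 statements merged into one kernel-verified Lean document; each statement's English description precedes it below -/
import Mathlib

section
/- For the connection ∇_u v := (1/2)[u,v] + u∘v on an F_man-algebra (g, ∘, [,]), the curvature R(u,v)w := ∇_u ∇_v w - ∇_v ∇_u w - ∇_{[u,v]} w satisfies R(u,v)w = -(1/4)[[u,v],w] + (1/2)(L(u,v,w) - L(v,u,w)), where L is the Leibnizator. -/
variable {V : Type*} [AddCommGroup V] [Module ℝ V]

/-- The Leibnizator L(u,v,w) := [u, v∘w] - [u,v]∘w - v∘[u,w]. -/
def Leib (mul br : V →ₗ[ℝ] V →ₗ[ℝ] V) (u v w : V) : V :=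
  br u (mul v w) - mul (br u v) w - mul v (br u w)

/-- The canonical F-connection ∇_u v = (1/2)[u,v] + u∘v. -/
noncomputable def Conn (mul br : V →ₗ[ℝ] V →ₗ[ℝ] V) (u v : V) : V :=
  (2⁻¹ : ℝ) • br u v + mul u v

/-- The curvature R(u,v)w = ∇_u∇_v w - ∇_v∇_u w - ∇_{[u,v]} w. -/
noncomputable def Curv (mul br : V →ₗ[ℝ] V →ₗ[ℝ] V) (u v w : V) : V :=
  Conn mul br u (Conn mul br v w) - Conn mul br v (Conn mul br u w)
    - Conn mul br (br u v) w

/-- Curvature formula for the canonical F-connection: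
R(u,v)w = -(1/4)[[u,v],w] + (1/2)(L(u,v,w) - L(v,u,w)). -/
theorem curvature_formula (mul br : V →ₗ[ℝ] V →ₗ[ℝ] V)
    (hcomm : ∀ u v, mul u v = mul v u)
    (hassoc : ∀ u v w, mul (mul u v) w = mul u (mul v w))
    (hanti : ∀ u v, br u v = - br v u)
    (hjac : ∀ u v w, br u (br v w) = br (br u v) w + br v (br u w)) :
    ∀ u v w, Curv mul br u v w
      = -(4⁻¹ : ℝ) • br (br u v) w
        + (2⁻¹ : ℝ) • (Leib mul br u v w - Leib mul br v u w) := by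
  intro u v w
  simp only [Curv, Conn, Leib, map_add, map_smul, map_sub, map_neg,
    LinearMap.add_apply, LinearMap.smul_apply, LinearMap.sub_apply, LinearMap.neg_apply,
    smul_add, smul_sub, smul_neg, smul_smul]
  rw [hjac u v w, hanti v u,
    show (mul u) ((mul v) w) = (mul v) ((mul u) w) from by
      rw [← hassoc, hcomm u v, hassoc]]
  simp only [map_neg, LinearMap.neg_apply]
  module
end

section
/- If (g, ∘, [,]) is an F_man-algebra whose Lie algebra is 2-step nilpotent (i.e., [[u,v],w] = 0 for all u,v,w), then the curvature of ∇_u v := (1/2)[u,v] + u∘v is R(u,v)w = (1/2)(L(u,v,w) - L(v,u,w)). -/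
variable {V : Type*} [AddCommGroup V] [Module ℝ V]

/-- For a 2-step nilpotent F_man-algebra, the curvature is
R(u,v)w = (1/2)(L(u,v,w) - L(v,u,w)). -/
theorem curvature_two_step_nilpotent (mul br : V →ₗ[ℝ] V →ₗ[ℝ] V)
    (hcomm : ∀ u v, mul u v = mul v u)
    (hassoc : ∀ u v w, mul (mul u v) w = mul u (mul v w))
    (hanti : ∀ u v, br u v = - br v u)
    (hjac : ∀ u v w, br u (br v w) = br (br u v) w + br v (br u w))
    (hnil : ∀ u v w, br (br u v) w = 0) :
    ∀ u v w, Curv mul br u v w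
      = (2⁻¹ : ℝ) • (Leib mul br u v w - Leib mul br v u w) := by
  intro u v w
  simp only [Curv, Conn, Leib, map_add, map_smul, map_sub, LinearMap.add_apply,
    LinearMap.smul_apply, LinearMap.sub_apply]
  rw [hnil u v w, hjac u v w, hnil u v w, hcomm (br u v) w, hcomm (br v u) w,
    hanti v u, ← hassoc u v w, hcomm u v, hassoc v u w]
  simp only [map_neg, LinearMap.neg_apply]
  module
end

section
/- On the 3-dimensional Heisenberg Lie algebra with bracket [e₂,e₃] = e₁ and commutative product e₂∘e₃ = e₁, e₃∘e₃ = e₂ (all other basis products zero), the triple (g, ∘, [,]) is an F_man-algebra (∘ is associative and the Hertling–Manin condition holds), the Leibnizator is non-zero (L(e₃,e₃,e₃) = -e₁), and the curvature R(u,v)w = -(1/4)[[u,v],w] + (1/2)(L(u,v,w) - L(v,u,w)) of the connection ∇_u v = (1/2)[u,v] + u∘v vanishes identically. -/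
/-!
Here `e_{i+1} = b i` and `xᵢ = b.repr x (i - 1)`. In coordinates
`u ∘ v = (u₂v₃ + u₃v₂) e₁ + u₃v₃ e₂` (with `e₃ = x` this is the maximal ideal of `ℝ[x]/(x⁴)`, so
`∘` is associative) and `[u, v] = (u₂v₃ - u₃v₂) e₁`. Brackets lie in `ℝ e₁`, which is central and
annihilates `∘`, so the Leibnizator reduces to `[u, v ∘ w] = -u₃v₃w₃ e₁`: it is totally symmetric
and vanishes when `u ∈ g ∘ g`, so both sides of the Hertling–Manin condition are `0`. In the
curvature formula `R(u,v)w = -¼[[u,v],w] + ½(L(u,v,w) - L(v,u,w))`, valid for any commutative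
associative `∘` and Lie bracket, both terms then vanish.
-/

variable {V : Type*} [AddCommGroup V] [Module ℝ V]

theorem curv_eq_leib_sub_leib {mul br : V →ₗ[ℝ] V →ₗ[ℝ] V} (hanti : ∀ u v, br u v = - br v u)
    (hjac : ∀ u v w, br u (br v w) = br (br u v) w + br v (br u w)) (u v w : V) :
    Curv mul br u v w = -(4⁻¹ : ℝ) • br (br u v) w
      + (2⁻¹ : ℝ) • (Leib mul br u v w - Leib mul br v u w)
      + (mul u (mul v w) - mul v (mul u w)) := by
  simp only [Curv, Conn, Leib, map_add, map_smul]
  rw [hanti v u, hjac u v w]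
  simp only [map_neg, LinearMap.neg_apply]
  module

section Heisenberg

variable (b : Module.Basis (Fin 3) ℝ V)

noncomputable def heisenbergMul : V →ₗ[ℝ] V →ₗ[ℝ] V :=
  LinearMap.mk₂ ℝ
    (fun u v => (b.repr u 1 * b.repr v 2 + b.repr u 2 * b.repr v 1) • b 0
      + (b.repr u 2 * b.repr v 2) • b 1)
    (by intros; simp only [map_add, Finsupp.add_apply]; module)
    (by intros; simp only [map_smul, Finsupp.smul_apply, smul_eq_mul]; module)
    (by intros; simp only [map_add, Finsupp.add_apply]; module)
    (by intros; simp only [map_smul, Finsupp.smul_apply, smul_eq_mul]; module)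

noncomputable def heisenbergBracket : V →ₗ[ℝ] V →ₗ[ℝ] V :=
  LinearMap.mk₂ ℝ (fun u v => (b.repr u 1 * b.repr v 2 - b.repr u 2 * b.repr v 1) • b 0)
    (by intros; simp only [map_add, Finsupp.add_apply]; module)
    (by intros; simp only [map_smul, Finsupp.smul_apply, smul_eq_mul]; module)
    (by intros; simp only [map_add, Finsupp.add_apply]; module)
    (by intros; simp only [map_smul, Finsupp.smul_apply, smul_eq_mul]; module)

variable {b}

@[simp]
theorem heisenbergMul_apply (u v : V) :
    heisenbergMul b u v = (b.repr u 1 * b.repr v 2 + b.repr u 2 * b.repr v 1) • b 0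
      + (b.repr u 2 * b.repr v 2) • b 1 :=
  rfl

@[simp]
theorem heisenbergBracket_apply (u v : V) :
    heisenbergBracket b u v = (b.repr u 1 * b.repr v 2 - b.repr u 2 * b.repr v 1) • b 0 :=
  rfl

theorem eq_heisenbergMul {mul : V →ₗ[ℝ] V →ₗ[ℝ] V} (hcomm : ∀ u v, mul u v = mul v u)
    (hm12 : mul (b 1) (b 2) = b 0) (hm22 : mul (b 2) (b 2) = b 1)
    (hm00 : mul (b 0) (b 0) = 0) (hm01 : mul (b 0) (b 1) = 0)
    (hm02 : mul (b 0) (b 2) = 0) (hm11 : mul (b 1) (b 1) = 0) : mul = heisenbergMul b := by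
  refine LinearMap.ext_basis b b fun i j => ?_
  fin_cases i <;> fin_cases j <;>
    simp [hcomm (b 1) (b 0), hcomm (b 2) (b 0), hcomm (b 2) (b 1), *]

theorem eq_heisenbergBracket {br : V →ₗ[ℝ] V →ₗ[ℝ] V} (hanti : ∀ u v, br u v = - br v u)
    (hb12 : br (b 1) (b 2) = b 0) (hb01 : br (b 0) (b 1) = 0) (hb02 : br (b 0) (b 2) = 0) :
    br = heisenbergBracket b := by
  have hself (u : V) : br u u = 0 := by
    have := hanti u u
    rwa [eq_neg_iff_add_eq_zero, ← two_smul ℝ, smul_eq_zero, or_iff_right two_ne_zero] at this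
  refine LinearMap.ext_basis b b fun i j => ?_
  fin_cases i <;> fin_cases j <;>
    simp [hanti (b 1) (b 0), hanti (b 2) (b 0), hanti (b 2) (b 1), hself, hb12, hb01, hb02]

theorem heisenbergMul_comm (u v : V) : heisenbergMul b u v = heisenbergMul b v u := by
  simp only [heisenbergMul_apply]
  ring_nf

theorem heisenbergMul_heisenbergMul_apply (u v w : V) :
    heisenbergMul b (heisenbergMul b u v) w = (b.repr u 2 * b.repr v 2 * b.repr w 2) • b 0 := by
  simp only [heisenbergMul_apply, map_add, map_smul, LinearMap.add_apply, LinearMap.smul_apply,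
    Module.Basis.repr_self, Finsupp.single_apply, Fin.reduceEq, if_true, if_false]
  module

theorem heisenbergMul_assoc (u v w : V) :
    heisenbergMul b (heisenbergMul b u v) w = heisenbergMul b u (heisenbergMul b v w) := by
  rw [heisenbergMul_heisenbergMul_apply, heisenbergMul_comm u,
    heisenbergMul_heisenbergMul_apply]
  ring_nf

theorem heisenbergBracket_heisenbergBracket (u v w : V) :
    heisenbergBracket b (heisenbergBracket b u v) w = 0 := by
  simp

theorem heisenbergMul_heisenbergBracket (u v w : V) :
    heisenbergMul b (heisenbergBracket b u v) w = 0 := by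
  simp

theorem leib_heisenberg_apply (u v w : V) :
    Leib (heisenbergMul b) (heisenbergBracket b) u v w
      = -(b.repr u 2 * b.repr v 2 * b.repr w 2) • b 0 := by
  rw [Leib, heisenbergMul_heisenbergBracket, heisenbergMul_comm v (heisenbergBracket b u w),
    heisenbergMul_heisenbergBracket]
  simp only [heisenbergMul_apply, heisenbergBracket_apply, map_add, map_smul,
    Module.Basis.repr_self, Finsupp.single_apply, Fin.reduceEq, if_true, if_false]
  module

theorem leib_heisenberg_comm (u v w : V) :
    Leib (heisenbergMul b) (heisenbergBracket b) u v w
      = Leib (heisenbergMul b) (heisenbergBracket b) v u w := by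
  rw [leib_heisenberg_apply, leib_heisenberg_apply]
  ring_nf

theorem leib_heisenberg_hertlingManin (u v w y : V) :
    Leib (heisenbergMul b) (heisenbergBracket b) (heisenbergMul b u v) w y
      = heisenbergMul b (Leib (heisenbergMul b) (heisenbergBracket b) u w y) v
        + heisenbergMul b u (Leib (heisenbergMul b) (heisenbergBracket b) v w y) := by
  simp [leib_heisenberg_apply]

end Heisenberg

/-- Case (1b): Heisenberg algebra [e₂,e₃] = e₁ with product e₂∘e₃ = e₁,
e₃∘e₃ = e₂.  It is an F_man-algebra, the Leibnizator is non-zero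
(L(e₃,e₃,e₃) = -e₁), and the curvature of the canonical connection
vanishes identically. -/
theorem heisenberg_A4 (b : Module.Basis (Fin 3) ℝ V) (mul br : V →ₗ[ℝ] V →ₗ[ℝ] V)
    (hcomm : ∀ u v, mul u v = mul v u)
    (hanti : ∀ u v, br u v = - br v u)
    (hjac : ∀ u v w, br u (br v w) = br (br u v) w + br v (br u w))
    (hb12 : br (b 1) (b 2) = b 0)
    (hb01 : br (b 0) (b 1) = 0) (hb02 : br (b 0) (b 2) = 0)
    (hm12 : mul (b 1) (b 2) = b 0) (hm22 : mul (b 2) (b 2) = b 1)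
    (hm00 : mul (b 0) (b 0) = 0) (hm01 : mul (b 0) (b 1) = 0)
    (hm02 : mul (b 0) (b 2) = 0) (hm11 : mul (b 1) (b 1) = 0) :
    (∀ u v w, mul (mul u v) w = mul u (mul v w)) ∧
    (∀ u v w y, Leib mul br (mul u v) w y
      = mul (Leib mul br u w y) v + mul u (Leib mul br v w y)) ∧
    Leib mul br (b 2) (b 2) (b 2) = - b 0 ∧
    (∀ u v w, Curv mul br u v w = 0) := by
  obtain rfl := eq_heisenbergMul hcomm hm12 hm22 hm00 hm01 hm02 hm11
  obtain rfl := eq_heisenbergBracket hanti hb12 hb01 hb02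
  refine ⟨heisenbergMul_assoc, leib_heisenberg_hertlingManin, ?_, fun u v w => ?_⟩
  · simp [leib_heisenberg_apply]
  · rw [curv_eq_leib_sub_leib hanti hjac, heisenbergBracket_heisenbergBracket,
      leib_heisenberg_comm, ← heisenbergMul_assoc, heisenbergMul_comm u v, heisenbergMul_assoc]
    simp
end

section
/- On the 3-dimensional Heisenberg Lie algebra with bracket [e₁,e₃] = e₂ and commutative product e₁∘e₁ = e₂, e₃∘e₃ = e₃ (other basis products zero), the triple is an F_man-algebra that is not Poisson: the Leibnizator satisfies L(e₁, e₃, e₃) = e₂ ≠ 0, and the set {u : L(u,·,·) ≡ 0} equals the span of {e₂, e₃}. -/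
variable {V : Type*} [AddCommGroup V] [Module ℝ V]

/-- Case (2a): Heisenberg algebra [e₁,e₃] = e₂ with product e₁∘e₁ = e₂,
e₃∘e₃ = e₃.  It is an F_man-algebra, not Poisson (L(e₁,e₃,e₃) = e₂ ≠ 0),
and {u : L(u,·,·) ≡ 0} = span{e₂, e₃}. -/
theorem heisenberg_D1 (b : Module.Basis (Fin 3) ℝ V) (mul br : V →ₗ[ℝ] V →ₗ[ℝ] V)
    (hcomm : ∀ u v, mul u v = mul v u)
    (hanti : ∀ u v, br u v = - br v u)
    (hb02 : br (b 0) (b 2) = b 1)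
    (hb01 : br (b 0) (b 1) = 0) (hb12 : br (b 1) (b 2) = 0)
    (hm00 : mul (b 0) (b 0) = b 1) (hm22 : mul (b 2) (b 2) = b 2)
    (hm01 : mul (b 0) (b 1) = 0) (hm02 : mul (b 0) (b 2) = 0)
    (hm11 : mul (b 1) (b 1) = 0) (hm12 : mul (b 1) (b 2) = 0) :
    (∀ u v w, mul (mul u v) w = mul u (mul v w)) ∧
    (∀ u v w y, Leib mul br (mul u v) w y
      = mul (Leib mul br u w y) v + mul u (Leib mul br v w y)) ∧
    Leib mul br (b 0) (b 2) (b 2) = b 1 ∧ b 1 ≠ 0 ∧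
    {u : V | ∀ v w, Leib mul br u v w = 0}
      = ↑(Submodule.span ℝ ({b 1, b 2} : Set V)) := by
  -- derived multiplication table
  have hm10 : mul (b 1) (b 0) = 0 := by rw [hcomm]; exact hm01
  have hm20 : mul (b 2) (b 0) = 0 := by rw [hcomm]; exact hm02
  have hm21 : mul (b 2) (b 1) = 0 := by rw [hcomm]; exact hm12
  have hdiag : ∀ u, br u u = 0 := by
    intro u
    have h : br u u + br u u = 0 := by
      nth_rewrite 1 [hanti]; abel
    have h2 : (2 : ℝ) • br u u = 0 := by rw [two_smul]; exact h
    simpa using (smul_eq_zero.mp h2).resolve_left (by norm_num)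
  have hb10 : br (b 1) (b 0) = 0 := by rw [hanti, hb01, neg_zero]
  have hb20 : br (b 2) (b 0) = -b 1 := by rw [hanti, hb02]
  have hb21 : br (b 2) (b 1) = 0 := by rw [hanti, hb12, neg_zero]
  -- expansion in coordinates
  have expand : ∀ u : V, u = b.repr u 0 • b 0 + b.repr u 1 • b 1 + b.repr u 2 • b 2 := by
    intro u
    have h := b.sum_repr u
    rw [Fin.sum_univ_three] at h
    exact h.symm
  -- closed formulas for mul and br
  have mulf : ∀ u v : V,
      mul u v = (b.repr u 0 * b.repr v 0) • b 1 + (b.repr u 2 * b.repr v 2) • b 2 := by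
    intro u v
    conv_lhs => rw [expand u, expand v]
    simp only [map_add, map_smul, LinearMap.add_apply, LinearMap.smul_apply,
      hm00, hm01, hm02, hm10, hm11, hm12, hm20, hm21, hm22,
      smul_zero, add_zero, zero_add, smul_smul]
    module
  have brf : ∀ u v : V,
      br u v = (b.repr u 0 * b.repr v 2 - b.repr u 2 * b.repr v 0) • b 1 := by
    intro u v
    conv_lhs => rw [expand u, expand v]
    simp only [map_add, map_smul, LinearMap.add_apply, LinearMap.smul_apply,
      hb01, hb02, hb10, hb12, hb20, hb21, hdiag,
      smul_zero, add_zero, zero_add, smul_smul, smul_neg, sub_smul]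
    module
  -- coordinates of combinations of b 1, b 2
  have c0 : ∀ x y : ℝ, b.repr (x • b 1 + y • b 2) 0 = 0 := by
    intro x y; simp [Finsupp.single_apply]
  have c2 : ∀ x y : ℝ, b.repr (x • b 1 + y • b 2) 2 = y := by
    intro x y; simp [Finsupp.single_apply]
  have c1 : ∀ x : ℝ, b.repr (x • b 1) 0 = 0 := by
    intro x; simp [Finsupp.single_apply]
  have c1' : ∀ x : ℝ, b.repr (x • b 1) 2 = 0 := by
    intro x; simp [Finsupp.single_apply]
  -- closed formula for Leib
  have Leibf : ∀ u v w : V,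
      Leib mul br u v w = (b.repr u 0 * b.repr v 2 * b.repr w 2) • b 1 := by
    intro u v w
    rw [Leib, mulf v w, brf u, mulf, mulf, brf u v, brf u w, c0, c2, c1, c1', c1, c1']
    module
  refine ⟨?_, ?_, ?_, b.ne_zero 1, ?_⟩
  · intro u v w
    rw [mulf u v, mulf v w, mulf, mulf, c0, c2, c0, c2]
    module
  · intro u v w y
    rw [Leibf, Leibf, Leibf, mulf u v, c0, mulf, mulf, c1, c1', c1, c1']
    module
  · rw [Leibf]
    simp [Finsupp.single_apply]
  · ext u
    simp only [Set.mem_setOf_eq, SetLike.mem_coe, Submodule.mem_span_pair]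
    constructor
    · intro h
      have h0 : b.repr u 0 = 0 := by
        have := h (b 2) (b 2)
        rw [Leibf] at this
        simp only [Module.Basis.repr_self, Finsupp.single_apply] at this
        norm_num at this
        exact this.resolve_right (b.ne_zero 1)
      refine ⟨b.repr u 1, b.repr u 2, ?_⟩
      conv_rhs => rw [expand u]
      rw [h0]
      module
    · rintro ⟨x, y, rfl⟩ v w
      rw [Leibf, c0]
      simp
end

section
/- On the Heisenberg Lie algebra with bracket [e₁,e₃] = e₂ and product e₁∘e₁ = e₂, e₃∘e₃ = e₃, the curvature R(u,v)w := (1/2)(L(u,v,w) - L(v,u,w)) of the canonical connection is non-zero (R(e₁,e₃)e₃ = (1/2)e₂), and for all u,v ∈ g the endomorphism R(u,v) is a scalar multiple of the single endomorphism J defined by J(e₃) = e₂, J(e₁) = J(e₂) = 0; moreover J² = 0. -/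
/-!
The curvature `R` is bilinear and alternating in `(u, v)`, so `R(u, v)` lies in the line `ℝ ∙ J`
as soon as every `R(eᵢ, eⱼ)` does. By antisymmetry it remains to compute, from the structure
constants, `R(e₁, e₂) = R(e₂, e₃) = 0` and `R(e₁, e₃) = ½ J`; here `eᵢ` is `b (i - 1)`.
-/

variable {V : Type*} [AddCommGroup V] [Module ℝ V]

theorem Submodule.apply_apply_mem_of_basis {ι κ R M N P : Type*} [CommSemiring R]
    [AddCommMonoid M] [AddCommMonoid N] [AddCommMonoid P] [Module R M] [Module R N] [Module R P]
    (b : Module.Basis ι R M) (b' : Module.Basis κ R N) (f : M →ₗ[R] N →ₗ[R] P)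
    (S : Submodule R P) (h : ∀ i j, f (b i) (b' j) ∈ S) (m : M) (n : N) : f m n ∈ S := by
  have hmap : Submodule.map₂ f ⊤ ⊤ ≤ S := by
    rw [← b.span_eq, ← b'.span_eq, Submodule.map₂_span_span, Submodule.span_le]
    rintro _ ⟨_, ⟨i, rfl⟩, _, ⟨j, rfl⟩, rfl⟩
    exact h i j
  exact hmap (Submodule.apply_mem_map₂ f Submodule.mem_top Submodule.mem_top)

def leibnizator (mul br : V →ₗ[ℝ] V →ₗ[ℝ] V) : V →ₗ[ℝ] V →ₗ[ℝ] Module.End ℝ V :=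
  (LinearMap.llcomp ℝ V V V).compl₁₂ br mul - br.compr₂ mul -
    (LinearMap.llcomp ℝ V V V).flip.compl₁₂ br mul

/-- The curvature of `∇_u v = ½[u,v] + u∘v` when `[[u,v],w] = 0`. -/
noncomputable def curvature (mul br : V →ₗ[ℝ] V →ₗ[ℝ] V) : V →ₗ[ℝ] V →ₗ[ℝ] Module.End ℝ V :=
  (2⁻¹ : ℝ) • (leibnizator mul br - (leibnizator mul br).flip)

theorem curvature_apply (mul br : V →ₗ[ℝ] V →ₗ[ℝ] V) (u v w : V) :
    curvature mul br u v w = (2⁻¹ : ℝ) • (Leib mul br u v w - Leib mul br v u w) :=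
  rfl

theorem curvature_self (mul br : V →ₗ[ℝ] V →ₗ[ℝ] V) (u : V) : curvature mul br u u = 0 := by
  ext w
  simp [curvature_apply]

theorem curvature_swap (mul br : V →ₗ[ℝ] V →ₗ[ℝ] V) (u v : V) :
    curvature mul br v u = -curvature mul br u v := by
  ext w
  simp only [curvature_apply, LinearMap.neg_apply, ← smul_neg, neg_sub]

structure IsHeisenbergD1 (b : Module.Basis (Fin 3) ℝ V) (mul br : V →ₗ[ℝ] V →ₗ[ℝ] V) : Prop where
  mul_comm : ∀ u v, mul u v = mul v u
  br_anti : ∀ u v, br u v = -br v u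
  br_zero_two : br (b 0) (b 2) = b 1
  br_zero_one : br (b 0) (b 1) = 0
  br_one_two : br (b 1) (b 2) = 0
  mul_zero_zero : mul (b 0) (b 0) = b 1
  mul_two_two : mul (b 2) (b 2) = b 2
  mul_zero_one : mul (b 0) (b 1) = 0
  mul_zero_two : mul (b 0) (b 2) = 0
  mul_one_one : mul (b 1) (b 1) = 0
  mul_one_two : mul (b 1) (b 2) = 0

namespace IsHeisenbergD1

variable {b : Module.Basis (Fin 3) ℝ V} {mul br : V →ₗ[ℝ] V →ₗ[ℝ] V}

theorem br_self (h : IsHeisenbergD1 b mul br) (u : V) : br u u = 0 := by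
  have := IsAddTorsionFree.of_isTorsionFree ℝ V
  exact self_eq_neg.mp (h.br_anti u u)

theorem br_two_zero (h : IsHeisenbergD1 b mul br) : br (b 2) (b 0) = -b 1 := by
  rw [h.br_anti, h.br_zero_two]

theorem br_one_zero (h : IsHeisenbergD1 b mul br) : br (b 1) (b 0) = 0 := by
  rw [h.br_anti, h.br_zero_one, neg_zero]

theorem br_two_one (h : IsHeisenbergD1 b mul br) : br (b 2) (b 1) = 0 := by
  rw [h.br_anti, h.br_one_two, neg_zero]

theorem mul_one_zero (h : IsHeisenbergD1 b mul br) : mul (b 1) (b 0) = 0 := by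
  rw [h.mul_comm, h.mul_zero_one]

theorem mul_two_zero (h : IsHeisenbergD1 b mul br) : mul (b 2) (b 0) = 0 := by
  rw [h.mul_comm, h.mul_zero_two]

theorem mul_two_one (h : IsHeisenbergD1 b mul br) : mul (b 2) (b 1) = 0 := by
  rw [h.mul_comm, h.mul_one_two]

theorem curvature_zero_one (h : IsHeisenbergD1 b mul br) : curvature mul br (b 0) (b 1) = 0 := by
  refine b.ext fun k => ?_
  fin_cases k <;>
    simp [curvature_apply, Leib, h.br_self, h.br_zero_two, h.br_zero_one, h.br_one_two,
      h.br_one_zero, h.mul_zero_zero, h.mul_zero_one, h.mul_zero_two, h.mul_one_one, h.mul_one_two,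
      h.mul_one_zero]

theorem curvature_one_two (h : IsHeisenbergD1 b mul br) : curvature mul br (b 1) (b 2) = 0 := by
  refine b.ext fun k => ?_
  fin_cases k <;>
    simp [curvature_apply, Leib, h.br_self, h.br_one_two, h.br_two_zero, h.br_one_zero,
      h.br_two_one, h.mul_two_two, h.mul_one_one, h.mul_one_two, h.mul_one_zero, h.mul_two_zero,
      h.mul_two_one]

theorem curvature_zero_two (h : IsHeisenbergD1 b mul br) {J : Module.End ℝ V}
    (hJ0 : J (b 0) = 0) (hJ1 : J (b 1) = 0) (hJ2 : J (b 2) = b 1) :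
    curvature mul br (b 0) (b 2) = (2⁻¹ : ℝ) • J := by
  refine b.ext fun k => ?_
  fin_cases k <;>
    simp [curvature_apply, Leib, h.br_self, h.br_zero_two, h.br_zero_one, h.br_two_zero,
      h.br_two_one, h.mul_zero_zero, h.mul_two_two, h.mul_zero_one, h.mul_zero_two, h.mul_one_one,
      h.mul_one_two, h.mul_one_zero, h.mul_two_zero, h.mul_two_one, hJ0, hJ1, hJ2]

theorem curvature_mem_span_singleton (h : IsHeisenbergD1 b mul br) {J : Module.End ℝ V}
    (hJ0 : J (b 0) = 0) (hJ1 : J (b 1) = 0) (hJ2 : J (b 2) = b 1) (u v : V) :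
    curvature mul br u v ∈ ℝ ∙ J := by
  have h02 : curvature mul br (b 0) (b 2) ∈ ℝ ∙ J := by
    rw [h.curvature_zero_two hJ0 hJ1 hJ2]
    exact Submodule.smul_mem _ _ (Submodule.mem_span_singleton_self J)
  refine Submodule.apply_apply_mem_of_basis b b _ _ (fun i j => ?_) u v
  fin_cases i <;> fin_cases j <;>
    simp [curvature_self, curvature_swap mul br (b 0) (b 1), curvature_swap mul br (b 0) (b 2),
      curvature_swap mul br (b 1) (b 2),
      h.curvature_zero_one, h.curvature_one_two, h02]

end IsHeisenbergD1

/-- Case (2a) curvature: R(u,v)w := (1/2)(L(u,v,w) - L(v,u,w)) is non-zero,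
every R(u,v) is a scalar multiple of the endomorphism J (J e₃ = e₂,
J e₁ = J e₂ = 0), and J² = 0. -/
theorem heisenberg_D1_holonomy (b : Module.Basis (Fin 3) ℝ V)
    (mul br : V →ₗ[ℝ] V →ₗ[ℝ] V)
    (hcomm : ∀ u v, mul u v = mul v u)
    (hanti : ∀ u v, br u v = - br v u)
    (hb02 : br (b 0) (b 2) = b 1)
    (hb01 : br (b 0) (b 1) = 0) (hb12 : br (b 1) (b 2) = 0)
    (hm00 : mul (b 0) (b 0) = b 1) (hm22 : mul (b 2) (b 2) = b 2)
    (hm01 : mul (b 0) (b 1) = 0) (hm02 : mul (b 0) (b 2) = 0)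
    (hm11 : mul (b 1) (b 1) = 0) (hm12 : mul (b 1) (b 2) = 0)
    (J : V →ₗ[ℝ] V)
    (hJ2 : J (b 2) = b 1) (hJ0 : J (b 0) = 0) (hJ1 : J (b 1) = 0) :
    (2⁻¹ : ℝ) • (Leib mul br (b 0) (b 2) (b 2) - Leib mul br (b 2) (b 0) (b 2))
        = (2⁻¹ : ℝ) • b 1 ∧
    (2⁻¹ : ℝ) • b 1 ≠ 0 ∧
    (∀ u v, ∃ c : ℝ, ∀ w,
      (2⁻¹ : ℝ) • (Leib mul br u v w - Leib mul br v u w) = c • J w) ∧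
    J ∘ₗ J = 0 := by
  have h : IsHeisenbergD1 b mul br :=
    ⟨hcomm, hanti, hb02, hb01, hb12, hm00, hm22, hm01, hm02, hm11, hm12⟩
  refine ⟨?_, smul_ne_zero (by norm_num) (b.ne_zero 1), fun u v => ?_, ?_⟩
  · rw [← curvature_apply, h.curvature_zero_two hJ0 hJ1 hJ2, LinearMap.smul_apply, hJ2]
  · obtain ⟨c, hc⟩ := Submodule.mem_span_singleton.mp (h.curvature_mem_span_singleton hJ0 hJ1 hJ2 u v)
    exact ⟨c, fun w => by rw [← curvature_apply, ← hc, LinearMap.smul_apply]⟩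
  · refine b.ext fun k => ?_
    fin_cases k <;> simp [hJ0, hJ1, hJ2]
end
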